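/- arXiv:1210.2995 — 3 statements merged into one kernel-verified Lean document; each statement's English description precedes it below -/
import Mathlib

section
/- If ‖·‖: K((t)) → ℝ is a seminorm that is bounded on every bounded subset of K((t)) (for the higher topology), then there exists an index i_0 ∈ ℤ such that ‖t^i‖ = 0 for all i ≥ i_0. -/
/-!
Common setting: `K` is a characteristic-zero local field (a finite extension of `ℚ_p`)
with ring of integers `𝒪 = {c : K | ‖c‖ ≤ 1}`, maximal ideal `𝔭 = {c : K | ‖c‖ < 1}`,
residue field of cardinality `q` and the absolute value normalised by `‖π‖ = q⁻¹`.
We formalise the two-dimensional local fields `K((t))` (as `LaurentSeries K`) and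
`K{{t}}` (as the submodule `mixedCarrier K` of `ℤ → K`), their higher topologies, and
the relevant functional-analytic notions (lattices, seminorms, boundedness,
c-compactness, compactoidness, completeness for nets, duality).
-/

open Filter Topology Set Pointwise
open scoped Classical

noncomputable section

namespace TwoDimLF

variable (K : Type) [NontriviallyNormedField K]

/-- `K` is a characteristic-zero nonarchimedean local field: the norm is nonarchimedean,
takes the values `q^ℤ` on `K˟` (with a uniformizer of norm `q⁻¹`), `K` is complete, locally
compact, of characteristic zero, and the residue field has exactly `q` elements. -/
structure IsCharZeroLocalField (q : ℕ) : Prop where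
  nonarch : ∀ x y : K, ‖x + y‖ ≤ max ‖x‖ ‖y‖
  one_lt_q : 1 < q
  norm_values : ∀ x : K, x ≠ 0 → ∃ n : ℤ, ‖x‖ = (q : ℝ) ^ (-n)
  exists_uniformizer : ∃ π : K, ‖π‖ = ((q : ℝ))⁻¹
  charZero : CharZero K
  locallyCompact : LocallyCompactSpace K
  complete : CompleteSpace K
  residue_card : ∃ s : Finset K, s.card = q ∧
    ∀ x : K, ‖x‖ ≤ 1 → ∃! y, y ∈ s ∧ ‖x - y‖ < 1

/-- The fractional ideal `𝔭^n ⊆ K` for `n ∈ ℤ ∪ {-∞}`, with the convention `𝔭^(-∞) = K`. -/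
def pB (q : ℕ) (n : WithBot ℤ) : Set K :=
  WithBot.recBotCoe Set.univ (fun m : ℤ => {x : K | ‖x‖ ≤ (q : ℝ) ^ (-m)}) n

/-- The fractional ideal `𝔭^n ⊆ K` for `n ∈ ℤ ∪ {∞}`, with the convention `𝔭^∞ = {0}`. -/
def pT (q : ℕ) (n : WithTop ℤ) : Set K :=
  WithTop.recTopCoe {0} (fun m : ℤ => {x : K | ‖x‖ ≤ (q : ℝ) ^ (-m)}) n

/-- The fractional ideal `𝔭^n ⊆ K` for `n ∈ ℤ ∪ {±∞}`. -/
def pE (q : ℕ) (n : WithBot (WithTop ℤ)) : Set K :=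
  WithBot.recBotCoe Set.univ (fun m : WithTop ℤ => pT K q m) n

/-- `q ^ n ∈ ℝ` for `n ∈ ℤ ∪ {-∞}`, with the convention `q^(-∞) = 0`. -/
def qpow (q : ℕ) (n : WithBot ℤ) : ℝ :=
  WithBot.recBotCoe 0 (fun m : ℤ => (q : ℝ) ^ m) n

/-- `1 - k` for `k ∈ ℤ ∪ {±∞}` (so `1 - (±∞) = ∓∞`). -/
def oneSubE : WithBot (WithTop ℤ) → WithBot (WithTop ℤ) :=
  WithBot.recBotCoe ((⊤ : WithTop ℤ) : WithBot (WithTop ℤ))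
    (WithTop.recTopCoe (⊥ : WithBot (WithTop ℤ))
      (fun z : ℤ => (((1 - z : ℤ) : WithTop ℤ) : WithBot (WithTop ℤ))))

section LCS

variable {V : Type} [AddCommGroup V] [Module K V]

/-- `S` is an `𝒪`-submodule of the `K`-vector space `V`, where `𝒪 = {c : K | ‖c‖ ≤ 1}`
is the ring of integers of `K`. -/
def IsOSubmodule (S : Set V) : Prop :=
  (0 : V) ∈ S ∧ (∀ x ∈ S, ∀ y ∈ S, x + y ∈ S) ∧
    ∀ c : K, ‖c‖ ≤ 1 → ∀ x ∈ S, c • x ∈ S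

/-- `S` is an `𝒪`-lattice in `V`: an `𝒪`-submodule such that every vector is carried
into `S` by some nonzero scalar. -/
def IsLatticeSet (S : Set V) : Prop :=
  IsOSubmodule K S ∧ ∀ v : V, ∃ a : K, a ≠ 0 ∧ a • v ∈ S

/-- A (nonarchimedean) seminorm on the `K`-vector space `V`. -/
def IsSeminorm (N : V → ℝ) : Prop :=
  (∀ (c : K) (v : V), N (c • v) = ‖c‖ * N v) ∧ ∀ v w : V, N (v + w) ≤ max (N v) (N w)

/-- The gauge seminorm of a lattice `Λ ⊆ V`: `‖v‖_Λ = inf {‖a‖ : v ∈ aΛ}`. -/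
def gaugeSeminorm (Λ : Set V) (v : V) : ℝ :=
  sInf {r : ℝ | ∃ a : K, v ∈ a • Λ ∧ r = ‖a‖}

/-- The group topology on `W` determined by a family `B` of neighbourhoods of zero:
neighbourhoods of `x` are generated by the translates `x + U`, `U ∈ B`. -/
def addTopologyOf {W : Type} [AddCommGroup W] (B : Set (Set W)) : TopologicalSpace W :=
  TopologicalSpace.mkOfNhds fun x => Filter.map (fun v => x + v) (⨅ U ∈ B, Filter.principal U)

/-- `B` is (Von-Neumann) bounded for the locally convex topology `τ`: every open lattice
absorbs it. -/
def IsVNBounded (τ : TopologicalSpace V) (B : Set V) : Prop :=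
  ∀ Λ : Set V, IsLatticeSet K Λ → IsOpen[τ] Λ → ∃ a : K, B ⊆ a • Λ

/-- The `𝒪`-submodule `A ⊆ V` is c-compact: for every decreasing filtered family of open
lattices `L i`, the canonical map `A → lim A/(L i ∩ A)` is surjective (phrased via
compatible families of representatives). -/
def IsCCompact (τ : TopologicalSpace V) (A : Set V) : Prop :=
  ∀ (ι : Type) (L : ι → Set V),
    (∀ i, IsLatticeSet K (L i) ∧ IsOpen[τ] (L i)) →
    (∀ i j, ∃ k, L k ⊆ L i ∧ L k ⊆ L j) →
    ∀ x : ι → V, (∀ i, x i ∈ A) →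
      (∀ i j, L j ⊆ L i → x j - x i ∈ L i) →
      ∃ a ∈ A, ∀ i, a - x i ∈ L i

/-- The `𝒪`-submodule `A ⊆ V` is compactoid: for every open lattice `Λ` there are finitely
many vectors `v₁, …, v_m ∈ V` with `A ⊆ Λ + 𝒪v₁ + ⋯ + 𝒪v_m`. -/
def IsCompactoid (τ : TopologicalSpace V) (A : Set V) : Prop :=
  ∀ Λ : Set V, IsLatticeSet K Λ → IsOpen[τ] Λ →
    ∃ (m : ℕ) (v : Fin m → V),
      A ⊆ {u : V | ∃ l ∈ Λ, ∃ c : Fin m → K, (∀ j, ‖c j‖ ≤ 1) ∧ u = l + ∑ j, c j • v j}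

/-- `A ⊆ V` is complete: every Cauchy net with values in `A` converges to a point of `A`
(for the topology `τ`). -/
def IsNetComplete (τ : TopologicalSpace V) (A : Set V) : Prop :=
  ∀ (ι : Type) [Preorder ι] [Nonempty ι],
    (∀ i j : ι, ∃ k, i ≤ k ∧ j ≤ k) →
    ∀ x : ι → V, (∀ i, x i ∈ A) →
      (∀ U ∈ @nhds V τ 0, ∃ i0, ∀ j ≥ i0, ∀ k ≥ i0, x j - x k ∈ U) →
      ∃ a ∈ A, Filter.Tendsto x Filter.atTop (@nhds V τ a)

/-- `τ` makes `V` a locally convex topological `K`-vector space: it is a vector-space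
topology whose filter of neighbourhoods of zero admits a basis of lattices. -/
def IsLCTVS (τ : TopologicalSpace V) : Prop :=
  @IsTopologicalAddGroup V τ _ ∧ @ContinuousSMul K V _ _ τ ∧
    ∀ S ∈ @nhds V τ 0, ∃ Λ : Set V, IsLatticeSet K Λ ∧ Λ ∈ @nhds V τ 0 ∧ Λ ⊆ S

/-- The topological dual of `(V, τ)`: continuous `K`-linear forms, as a set of functions. -/
def dualSet (τ : TopologicalSpace V) : Set (V → K) :=
  {l | IsLinearMap K l ∧ @Continuous V K τ _ l}

/-- Basic neighbourhoods of zero for the `c`-topology on `V → K`: uniform convergence on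
compactoid `𝒪`-submodules. -/
def cTopBasic (τ : TopologicalSpace V) : Set (Set (V → K)) :=
  {S | ∃ (B : Set V) (ε : ℝ), IsOSubmodule K B ∧ IsCompactoid K τ B ∧ 0 < ε ∧
    S = {l : V → K | ∀ x ∈ B, ‖l x‖ ≤ ε}}

/-- The `c`-topology (uniform convergence on compactoid `𝒪`-submodules) on `V → K`. -/
def cTop (τ : TopologicalSpace V) : TopologicalSpace (V → K) :=
  addTopologyOf (cTopBasic K τ)

/-- The pseudo-polar `A^p = {l ∈ V' : |l(v)| < 1 for all v ∈ A}`. -/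
def pseudoPolar (τ : TopologicalSpace V) (A : Set V) : Set (V → K) :=
  {l | l ∈ dualSet K τ ∧ ∀ v ∈ A, ‖l v‖ < 1}

/-- The pseudo-bipolar `A^{pp} = {v ∈ V : |l(v)| < 1 for all l ∈ A^p}`. -/
def pseudoBipolar (τ : TopologicalSpace V) (A : Set V) : Set V :=
  {v | ∀ l ∈ pseudoPolar K τ A, ‖l v‖ < 1}

end LCS

/-! ### The equal characteristic field `K((t))` -/

/-- Basic neighbourhoods of zero for the higher topology on `K((t))`:
`Σ U_i t^i` where each `U_i` is an open neighbourhood of `0` in `K` and `U_i = K` for all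
sufficiently large `i`. -/
def laurentBasic : Set (Set (LaurentSeries K)) :=
  {S | ∃ U : ℤ → Set K, (∀ i, IsOpen (U i) ∧ (0 : K) ∈ U i) ∧
    (∃ N : ℤ, ∀ i, N ≤ i → U i = Set.univ) ∧
    S = {f : LaurentSeries K | ∀ i, f.coeff i ∈ U i}}

/-- The higher topology on `K((t))`. -/
def laurentTop : TopologicalSpace (LaurentSeries K) := addTopologyOf (laurentBasic K)

/-- `Λ = Σ_{i∈ℤ} 𝔭^{n_i} t^i ⊆ K((t))` for a sequence `(n_i) ⊆ ℤ ∪ {-∞}`. -/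
def laurentLambda (q : ℕ) (n : ℤ → WithBot ℤ) : Set (LaurentSeries K) :=
  {f | ∀ i, f.coeff i ∈ pB K q (n i)}

/-- `B = Σ_{i∈ℤ} 𝔭^{k_i} t^i ⊆ K((t))` for a sequence `(k_i) ⊆ ℤ ∪ {∞}`. -/
def laurentPT (q : ℕ) (k : ℤ → WithTop ℤ) : Set (LaurentSeries K) :=
  {f | ∀ i, f.coeff i ∈ pT K q (k i)}

/-- `A = Σ_{i∈ℤ} 𝔭^{k_i} t^i ⊆ K((t))` for a sequence `(k_i) ⊆ ℤ ∪ {±∞}`. -/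
def laurentPE (q : ℕ) (k : ℤ → WithBot (WithTop ℤ)) : Set (LaurentSeries K) :=
  {f | ∀ i, f.coeff i ∈ pE K q (k i)}

/-- The admissible seminorm `‖Σ x_i t^i‖ = max_i ‖x_i‖ q^{n_i}` on `K((t))`. -/
def laurentSeminorm (q : ℕ) (n : ℤ → WithBot ℤ) (f : LaurentSeries K) : ℝ :=
  sSup {r : ℝ | ∃ i : ℤ, r = ‖f.coeff i‖ * qpow q (n i)}

/-- The ring of integers `K[[t]] ⊆ K((t))`. -/
def laurentIntegers : Set (LaurentSeries K) := {f | ∀ i, i < 0 → f.coeff i = 0}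

/-- The rank-two ring of integers `𝒪 + tK[[t]] ⊆ K((t))`. -/
def laurentRankTwo : Set (LaurentSeries K) :=
  {f | (∀ i, i < 0 → f.coeff i = 0) ∧ ‖f.coeff 0‖ ≤ 1}

/-- The pairing `γ(x)(y) = π₀(xy) = Σ_i x_i y_{-i}` on `K((t))`. -/
def laurentPairing (x y : LaurentSeries K) : K := ∑' i : ℤ, x.coeff i * y.coeff (-i)

/-! ### The mixed characteristic field `K{{t}}` -/

/-- The underlying `K`-vector space of `K{{t}}`: functions `x : ℤ → K` (coefficients of
`Σ x_i t^i`) with `inf_i v_K(x_i) > -∞` (i.e. bounded norms) and `x_i → 0` as `i → -∞`. -/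
def mixedCarrier : Submodule K (ℤ → K) where
  carrier := {x | (∃ C : ℝ, ∀ i, ‖x i‖ ≤ C) ∧ Filter.Tendsto x Filter.atBot (nhds (0 : K))}
  zero_mem' := ⟨⟨0, fun i => by simp⟩, tendsto_const_nhds⟩
  add_mem' := by
    rintro x y ⟨⟨C, hC⟩, hx⟩ ⟨⟨D, hD⟩, hy⟩
    refine ⟨⟨C + D, fun i => (norm_add_le _ _).trans (add_le_add (hC i) (hD i))⟩, ?_⟩
    have hxy := hx.add hy
    rw [add_zero] at hxy
    exact hxy
  smul_mem' := by
    rintro c x ⟨⟨C, hC⟩, hx⟩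
    refine ⟨⟨‖c‖ * C, fun i => ?_⟩, ?_⟩
    · have h : ‖(c • x) i‖ = ‖c‖ * ‖x i‖ := by simp [norm_smul]
      rw [h]
      exact mul_le_mul_of_nonneg_left (hC i) (norm_nonneg c)
    · have hcx := hx.const_smul c
      rw [smul_zero] at hcx
      exact hcx

/-- The field `K{{t}}`, as a `K`-vector space. -/
abbrev Mt := ↥(mixedCarrier K)

/-- Basic neighbourhoods of zero for the higher topology on `K{{t}}`:
`Σ V_i t^i` where each `V_i` is an open neighbourhood of `0` in `K`, some `𝔭^c` is
contained in every `V_i`, and for every `l` eventually `𝔭^l ⊆ V_i`. -/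
def mixedBasic (q : ℕ) : Set (Set (Mt K)) :=
  {S | ∃ Vs : ℤ → Set K, (∀ i, IsOpen (Vs i) ∧ (0 : K) ∈ Vs i) ∧
    (∃ c : ℤ, ∀ i, {x : K | ‖x‖ ≤ (q : ℝ) ^ (-c)} ⊆ Vs i) ∧
    (∀ l : ℤ, ∃ i0 : ℤ, ∀ i, i0 ≤ i → {x : K | ‖x‖ ≤ (q : ℝ) ^ (-l)} ⊆ Vs i) ∧
    S = {f : Mt K | ∀ i, f.1 i ∈ Vs i}}

/-- The higher topology on `K{{t}}`. -/
def mixedTop (q : ℕ) : TopologicalSpace (Mt K) := addTopologyOf (mixedBasic K q)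

/-- `Λ = Σ_{i∈ℤ} 𝔭^{n_i} t^i ⊆ K{{t}}` for a sequence `(n_i) ⊆ ℤ ∪ {-∞}`. -/
def mixedLambda (q : ℕ) (n : ℤ → WithBot ℤ) : Set (Mt K) :=
  {f | ∀ i, f.1 i ∈ pB K q (n i)}

/-- `B = Σ_{i∈ℤ} 𝔭^{k_i} t^i ⊆ K{{t}}` for a sequence `(k_i) ⊆ ℤ ∪ {∞}`. -/
def mixedPT (q : ℕ) (k : ℤ → WithTop ℤ) : Set (Mt K) :=
  {f | ∀ i, f.1 i ∈ pT K q (k i)}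

/-- `A = Σ_{i∈ℤ} 𝔭^{k_i} t^i ⊆ K{{t}}` for a sequence `(k_i) ⊆ ℤ ∪ {±∞}`. -/
def mixedPE (q : ℕ) (k : ℤ → WithBot (WithTop ℤ)) : Set (Mt K) :=
  {f | ∀ i, f.1 i ∈ pE K q (k i)}

/-- The admissible seminorm `‖Σ x_i t^i‖ = sup_i ‖x_i‖ q^{n_i}` on `K{{t}}`. -/
def mixedSeminorm (q : ℕ) (n : ℤ → WithBot ℤ) (f : Mt K) : ℝ :=
  sSup {r : ℝ | ∃ i : ℤ, r = ‖f.1 i‖ * qpow q (n i)}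

/-- The ring of integers `𝒪{{t}} ⊆ K{{t}}`. -/
def mixedIntegers : Set (Mt K) := {f | ∀ i, ‖f.1 i‖ ≤ 1}

/-- The rank-two ring of integers `Σ_{i<0} 𝔭 t^i + Σ_{i≥0} 𝒪 t^i ⊆ K{{t}}`. -/
def mixedRankTwo (q : ℕ) : Set (Mt K) :=
  {f | (∀ i : ℤ, i < 0 → ‖f.1 i‖ ≤ ((q : ℝ))⁻¹) ∧ ∀ i : ℤ, 0 ≤ i → ‖f.1 i‖ ≤ 1}

/-- The monomial `t^i ∈ K{{t}}`. -/
def mixedT (i : ℤ) : Mt K :=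
  ⟨fun j => if j = i then 1 else 0,
    ⟨⟨1, fun j => by by_cases h : j = i <;> simp [h]⟩, by
      refine (tendsto_const_nhds : Filter.Tendsto (fun _ : ℤ => (0 : K))
        Filter.atBot (nhds 0)).congr' ?_
      filter_upwards [Filter.eventually_le_atBot (i - 1)] with j hj
      have h : j ≠ i := by omega
      simp [h]⟩⟩

/-- Coefficients of the product of two elements of `K{{t}}` (Cauchy product). -/
def mixedMulCoeff (x y : Mt K) : ℤ → K := fun k => ∑' i : ℤ, x.1 i * y.1 (k - i)

/-- Multiplication on `K{{t}}`. -/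
def mixedMul (x y : Mt K) : Mt K :=
  if h : mixedMulCoeff K x y ∈ mixedCarrier K then ⟨_, h⟩ else 0

/-- The pairing `γ(x)(y) = π₀(xy) = Σ_i x_i y_{-i}` on `K{{t}}`. -/
def mixedPairing (x y : Mt K) : K := ∑' i : ℤ, x.1 i * y.1 (-i)

/-!
If `N (t^n) ≠ 0` for infinitely many `n`, rescale these monomials so that `N (c_n t^n) > n`.
But every set of monomials `{c_n t^n}` is bounded: a basic neighbourhood of zero puts no
condition on high-degree coefficients, so an open lattice contains all but finitely many of
the `c_n t^n` and absorbs the rest. Hence `N` is unbounded on a bounded set.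
-/

section LatticeAbsorption

variable {K} {V : Type} [AddCommGroup V] [Module K V]

theorem IsSeminorm.nonneg {N : V → ℝ} (hN : IsSeminorm K N) (v : V) : 0 ≤ N v := by
  have h_zero : N 0 = 0 := by simpa using hN.1 0 0
  have h_neg : N (-v) = N v := by simpa using hN.1 (-1) v
  have := hN.2 v (-v)
  rw [add_neg_cancel, h_zero, h_neg, max_self] at this
  exact this

theorem IsOSubmodule.balanced {Λ : Set V} (hΛ : IsOSubmodule K Λ) : Balanced K Λ :=
  balanced_iff_smul_mem.2 fun c hc _ hx => hΛ.2.2 c hc _ hx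

theorem IsLatticeSet.absorbent {Λ : Set V} (hΛ : IsLatticeSet K Λ) : Absorbent K Λ := by
  intro v
  obtain ⟨a, ha, hav⟩ := hΛ.2 v
  have hv : v ∈ a⁻¹ • Λ := (Set.mem_inv_smul_set_iff₀ ha _ _).2 hav
  exact absorbs_iff_norm.2 ⟨‖a⁻¹‖, fun c hc => Set.singleton_subset_iff.2
    (hΛ.1.balanced.smul_mono hc hv)⟩

theorem isVNBounded_of_finite_diff {τ : TopologicalSpace V} {B : Set V}
    (hB : ∀ Λ : Set V, IsLatticeSet K Λ → IsOpen[τ] Λ → (B \ Λ).Finite) :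
    IsVNBounded K τ B := by
  intro Λ hΛ hΛ_open
  have h_absorbs : Absorbs K Λ (Λ ∪ (B \ Λ)) :=
    hΛ.1.balanced.absorbs_self.union (hΛ.absorbent.absorbs_finite (hB Λ hΛ hΛ_open))
  obtain ⟨a, ha⟩ := h_absorbs.eventually.exists
  exact ⟨a, fun x hx => ha (by by_cases h : x ∈ Λ <;> simp [h, hx])⟩

end LatticeAbsorption

theorem exists_mem_subset_of_isOpen_addTopologyOf {W : Type} [AddCommGroup W]
    {B : Set (Set W)} (hB_nonempty : B.Nonempty) (hB_inter : ∀ S ∈ B, ∀ T ∈ B, S ∩ T ∈ B)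
    {U : Set W} (hU : IsOpen[addTopologyOf B] U) (hU₀ : (0 : W) ∈ U) : ∃ S ∈ B, S ⊆ U := by
  have hU_mem : U ∈ ⨅ S ∈ B, 𝓟 S := by simpa using hU 0 hU₀
  have h_directed : DirectedOn ((fun S => 𝓟 S) ⁻¹'o (· ≥ ·)) B := fun S hS T hT =>
    ⟨S ∩ T, hB_inter S hS T hT, principal_mono.2 inter_subset_left,
      principal_mono.2 inter_subset_right⟩
  simpa using (mem_biInf_of_directed h_directed hB_nonempty).1 hU_mem

theorem laurentBasic_nonempty : (laurentBasic K).Nonempty :=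
  ⟨_, fun _ => univ, fun _ => ⟨isOpen_univ, mem_univ _⟩, ⟨0, fun _ _ => rfl⟩, rfl⟩

theorem inter_mem_laurentBasic {S T : Set (LaurentSeries K)} (hS : S ∈ laurentBasic K)
    (hT : T ∈ laurentBasic K) : S ∩ T ∈ laurentBasic K := by
  obtain ⟨U, hU, ⟨M, hM⟩, rfl⟩ := hS
  obtain ⟨U', hU', ⟨M', hM'⟩, rfl⟩ := hT
  refine ⟨fun i => U i ∩ U' i, fun i => ⟨(hU i).1.inter (hU' i).1, (hU i).2, (hU' i).2⟩,
    ⟨max M M', fun i hi => ?_⟩, ?_⟩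
  · simp [hM i (le_of_max_le_left hi), hM' i (le_of_max_le_right hi)]
  · ext f
    simp [forall_and]

theorem eventually_single_mem_of_mem_laurentBasic {S : Set (LaurentSeries K)}
    (hS : S ∈ laurentBasic K) : ∀ᶠ n in atTop, ∀ c : K, HahnSeries.single n c ∈ S := by
  obtain ⟨U, hU, ⟨M, hM⟩, rfl⟩ := hS
  filter_upwards [eventually_ge_atTop M] with n hn c i
  by_cases hi : i = n
  · simp [hM i (hi ▸ hn)]
  · simpa [HahnSeries.coeff_single, hi] using (hU i).2

theorem eventually_single_mem_of_isOpen_laurentTop {Λ : Set (LaurentSeries K)}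
    (hΛ : IsOpen[laurentTop K] Λ) (hΛ₀ : (0 : LaurentSeries K) ∈ Λ) :
    ∀ᶠ n in atTop, ∀ c : K, HahnSeries.single n c ∈ Λ := by
  obtain ⟨S, hS, hSΛ⟩ := exists_mem_subset_of_isOpen_addTopologyOf (laurentBasic_nonempty K)
    (fun _ hS _ hT => inter_mem_laurentBasic K hS hT) hΛ hΛ₀
  exact (eventually_single_mem_of_mem_laurentBasic K hS).mono fun n hn c => hSΛ (hn c)

theorem isVNBounded_range_single (c : ℕ → K) :
    IsVNBounded K (laurentTop K) (range fun n : ℕ => HahnSeries.single (n : ℤ) (c n)) := by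
  refine isVNBounded_of_finite_diff fun Λ hΛ hΛ_open => ?_
  obtain ⟨M, hM⟩ := eventually_atTop.1 <| tendsto_natCast_atTop_atTop.eventually
    (eventually_single_mem_of_isOpen_laurentTop K hΛ_open hΛ.1.1)
  refine ((finite_lt_nat M).image fun n : ℕ => HahnSeries.single (n : ℤ) (c n)).subset ?_
  rintro _ ⟨⟨n, rfl⟩, hn⟩
  exact ⟨n, not_le.1 fun h => hn (hM n h (c n)), rfl⟩

theorem statement8
    (N : LaurentSeries K → ℝ) (hN : IsSeminorm K N)
    (hbdd : ∀ B : Set (LaurentSeries K), IsVNBounded K (laurentTop K) B →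
      ∃ C : ℝ, ∀ x ∈ B, N x ≤ C) :
    ∃ i0 : ℤ, ∀ i : ℤ, i0 ≤ i → N (HahnSeries.single i (1 : K)) = 0 := by
  have h_scale : ∀ n : ℕ, ∃ c : K, 0 < N (HahnSeries.single (n : ℤ) 1) →
      (n : ℝ) < ‖c‖ * N (HahnSeries.single (n : ℤ) 1) := fun n => by
    by_cases hpos : 0 < N (HahnSeries.single (n : ℤ) (1 : K))
    · obtain ⟨c, hc⟩ := NormedField.exists_lt_norm K (n / N (HahnSeries.single (n : ℤ) 1))
      exact ⟨c, fun _ => (div_lt_iff₀ hpos).1 hc⟩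
    · exact ⟨0, fun h => absurd h hpos⟩
  choose c hc using h_scale
  obtain ⟨C, hC⟩ := hbdd _ (isVNBounded_range_single K c)
  refine ⟨⌈C⌉₊, fun i hi => ?_⟩
  lift i to ℕ using (Nat.cast_nonneg _).trans hi
  refine ((hN.nonneg _).eq_or_lt.resolve_right fun hpos => ?_).symm
  have h_single : HahnSeries.single (i : ℤ) (c i) = c i • HahnSeries.single (i : ℤ) 1 := by
    ext j
    by_cases hj : j = i <;> simp [hj]
  have h_le : ‖c i‖ * N (HahnSeries.single (i : ℤ) 1) ≤ C := by
    rw [← hN.1, ← h_single]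
    exact hC _ ⟨i, rfl⟩
  have h_ceil : (⌈C⌉₊ : ℝ) ≤ i := by exact_mod_cast hi
  linarith [hc i hpos, Nat.le_ceil C]

end TwoDimLF
end
end

section
/- In K((t)) with the higher topology, the ring of integers K[[t]] and the rank-two ring of integers 𝒪 + tK[[t]] are c-compact 𝒪-submodules, but neither of them is compactoid. -/
/-!
Common setting: `K` is a characteristic-zero local field (a finite extension of `ℚ_p`)
with ring of integers `𝒪 = {c : K | ‖c‖ ≤ 1}`, maximal ideal `𝔭 = {c : K | ‖c‖ < 1}`,
residue field of cardinality `q` and the absolute value normalised by `‖π‖ = q⁻¹`.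
We formalise the two-dimensional local fields `K((t))` (as `LaurentSeries K`) and
`K{{t}}` (as the submodule `mixedCarrier K` of `ℤ → K`), their higher topologies, and
the relevant functional-analytic notions (lattices, seminorms, boundedness,
c-compactness, compactoidness, completeness for nets, duality).
-/

open Filter Topology Set Pointwise
open scoped Classical

noncomputable section

namespace TwoDimLF

variable (K : Type) [NontriviallyNormedField K]

/-!
Both rings have the form `Σ_{i ≥ 0} Q_i t^i` with each `Q_i` an open `𝒪`-submodule of `K`
(`K` itself, or `𝒪` in degree `0` for the rank-two ring). Such a module `A` is c-compact: for a
compatible family `x` along a filtered family of open lattices `L`, the sets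
`C_i = A ∩ (x_i + L_i)` are directed cosets of `A ∩ L_i`, and a common point is built one
coefficient at a time. Given a common prefix below degree `n`, the admissible `n`-th coefficients
for `C_i` form a coset of an open `𝒪`-submodule of `K`, which is either all of `K` or compact, so
the directed family of these cosets has a common point. The series `g` so obtained lies in every
`C_i`, because an open lattice contains every series of `A` vanishing below some degree.

Neither ring is compactoid: each contains the whole line `K t^j` (for `j = 0`, resp. `j = 1`), but
the open lattice `{f : ‖f_j‖ ≤ 1}` plus finitely many `𝒪 v_k` bounds the `j`-th coefficient.
-/

variable {K}

section HigherTopology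

lemma univ_mem_laurentBasic : (univ : Set (LaurentSeries K)) ∈ laurentBasic K :=
  ⟨fun _ => univ, fun _ => ⟨isOpen_univ, mem_univ 0⟩, ⟨0, fun _ _ => rfl⟩, by simp⟩

lemma inter_mem_laurentBasic_s13 {W₁ W₂ : Set (LaurentSeries K)} (h₁ : W₁ ∈ laurentBasic K)
    (h₂ : W₂ ∈ laurentBasic K) : W₁ ∩ W₂ ∈ laurentBasic K := by
  obtain ⟨U₁, hU₁, ⟨N₁, hN₁⟩, rfl⟩ := h₁
  obtain ⟨U₂, hU₂, ⟨N₂, hN₂⟩, rfl⟩ := h₂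
  refine ⟨fun i => U₁ i ∩ U₂ i, fun i => ⟨(hU₁ i).1.inter (hU₂ i).1, (hU₁ i).2, (hU₂ i).2⟩,
    ⟨max N₁ N₂, fun i hi => ?_⟩, by ext f; simp [forall_and]⟩
  simp [hN₁ i (le_of_max_le_left hi), hN₂ i (le_of_max_le_right hi)]

lemma isOpen_laurentTop_iff {S : Set (LaurentSeries K)} :
    IsOpen[laurentTop K] S ↔ ∀ a ∈ S, ∃ W ∈ laurentBasic K, ∀ w ∈ W, a + w ∈ S := by
  have hbasis : (⨅ U ∈ laurentBasic K, 𝓟 U).HasBasis (· ∈ laurentBasic K) id :=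
    hasBasis_biInf_principal
      (fun _ h₁ _ h₂ => ⟨_, inter_mem_laurentBasic_s13 h₁ h₂, inter_subset_left, inter_subset_right⟩)
      ⟨univ, univ_mem_laurentBasic⟩
  exact forall₂_congr fun a _ => hbasis.mem_iff

lemma exists_mem_of_coeff_eq_zero_below {L : Set (LaurentSeries K)} (hL : IsOpen[laurentTop K] L)
    (h0 : (0 : LaurentSeries K) ∈ L) :
    ∃ N : ℤ, ∀ f : LaurentSeries K, (∀ m < N, f.coeff m = 0) → f ∈ L := by
  obtain ⟨W, ⟨U, hU, ⟨N, hN⟩, rfl⟩, hWL⟩ := isOpen_laurentTop_iff.1 hL 0 h0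
  refine ⟨N, fun f hf => ?_⟩
  have hf' : f ∈ {w : LaurentSeries K | ∀ i, w.coeff i ∈ U i} := fun i => by
    rcases lt_or_ge i N with hi | hi
    · simpa [hf i hi] using (hU i).2
    · simp [hN i hi]
  simpa using hWL f hf'

lemma isOpen_setOf_coeff_mem (j : ℤ) {V : Set K} (hV : IsOpen V) :
    IsOpen[laurentTop K] {f : LaurentSeries K | f.coeff j ∈ V} := by
  refine isOpen_laurentTop_iff.2 fun a ha => ?_
  let U : ℤ → Set K := Function.update (fun _ => univ) j ((a.coeff j + ·) ⁻¹' V)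
  refine ⟨{w | ∀ i, w.coeff i ∈ U i}, ⟨U, fun i => ?_, ⟨j + 1, fun i hi => ?_⟩, rfl⟩,
    fun w hw => ?_⟩
  · rcases eq_or_ne i j with rfl | hij
    · simpa [U] using ⟨hV.preimage (continuous_const_add _), ha⟩
    · simp [U, hij]
  · simp [U, show i ≠ j by omega]
  · simpa [U] using hw j

lemma isOpen_setOf_single_mem (n : ℤ) {S : Set (LaurentSeries K)} (hS : IsOpen[laurentTop K] S) :
    IsOpen {c : K | HahnSeries.single n c ∈ S} := by
  refine isOpen_iff_mem_nhds.2 fun c hc => ?_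
  obtain ⟨W, ⟨U, hU, -, rfl⟩, hWS⟩ := isOpen_laurentTop_iff.1 hS _ hc
  have hnhds : (· - c) ⁻¹' U n ∈ 𝓝 c :=
    ((hU n).1.preimage (continuous_sub_right c)).mem_nhds (by simpa using (hU n).2)
  refine Filter.mem_of_superset hnhds fun d hd => ?_
  have hsingle : HahnSeries.single n (d - c) ∈ {w : LaurentSeries K | ∀ i, w.coeff i ∈ U i} := by
    intro i
    rcases eq_or_ne i n with rfl | hin
    · simpa using hd
    · simpa [HahnSeries.coeff_single, hin] using (hU i).2
  simpa [← HahnSeries.single_add] using hWS _ hsingle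

end HigherTopology

lemma nonempty_iInter_of_directed_of_isCompact_or_eq_univ {X ι : Type*} [TopologicalSpace X]
    [T2Space X] [Nonempty ι] {t : ι → Set X} (htd : Directed (· ⊇ ·) t)
    (htn : ∀ i, (t i).Nonempty) (ht : ∀ i, IsCompact (t i) ∨ t i = univ) :
    (⋂ i, t i).Nonempty := by
  by_cases hcpt : ∃ i, IsCompact (t i)
  · obtain ⟨i₀, hi₀⟩ := hcpt
    have htcl : ∀ i, IsClosed (t i) := fun i =>
      (ht i).elim IsCompact.isClosed fun h => h ▸ isClosed_univ
    by_contra hempty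
    obtain ⟨i, hi⟩ := hi₀.elim_directed_family_closed t htcl
      (by rw [not_nonempty_iff_eq_empty] at hempty; rw [hempty, inter_empty]) htd
    obtain ⟨j, hji₀, hji⟩ := htd i₀ i
    exact (htn j).ne_empty (subset_empty_iff.1 (hi ▸ subset_inter hji₀ hji))
  · push Not at hcpt
    simpa [fun i => (ht i).resolve_left (hcpt i)] using htn (Classical.arbitrary ι)

lemma addSubgroup_eq_top_or_isCompact [ProperSpace K]
    (P : AddSubgroup K) (hP : IsOpen (P : Set K))
    (hsmul : ∀ c : K, ‖c‖ ≤ 1 → ∀ x ∈ P, c * x ∈ P) : P = ⊤ ∨ IsCompact (P : Set K) := by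
  by_cases hb : Bornology.IsBounded (P : Set K)
  · exact Or.inr (Metric.isCompact_of_isClosed_isBounded (P.isClosed_of_isOpen hP) hb)
  refine Or.inl (eq_top_iff.2 fun y _ => ?_)
  obtain ⟨p, hp, hyp⟩ : ∃ p ∈ P, ‖y‖ < ‖p‖ := by
    by_contra! h
    exact hb (isBounded_iff_forall_norm_le.2 ⟨‖y‖, h⟩)
  have hp0 : p ≠ 0 := norm_pos_iff.1 ((norm_nonneg y).trans_lt hyp)
  have hy : y = y * p⁻¹ * p := by field_simp
  rw [hy]
  refine hsmul _ ?_ p hp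
  rw [norm_mul, norm_inv, ← div_eq_mul_inv]
  exact div_le_one_of_le₀ hyp.le (norm_nonneg p)

lemma exists_forall_of_forall_exists_update {α : Type*} (F : ℤ → (ℤ → α) → Prop)
    (hF : ∀ n a b, (∀ m < n, a m = b m) → F n a → F n b) {N₀ : ℤ} {a₀ : ℤ → α}
    (h₀ : F N₀ a₀) (hstep : ∀ n a, N₀ ≤ n → F n a → ∃ c, F (n + 1) (Function.update a n c)) :
    ∃ a, ∀ n, N₀ ≤ n → F n a := by
  have : Nonempty α := ⟨a₀ N₀⟩
  choose! c hc using hstep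
  let s : ℕ → ℤ → α := fun k =>
    Nat.rec a₀ (fun k b => Function.update b (N₀ + k) (c (N₀ + k) b)) k
  have hs : ∀ k : ℕ, F (N₀ + k) (s k) := by
    intro k
    induction k with
    | zero => simpa [s] using h₀
    | succ k ih =>
      have := hc _ _ (by omega) ih
      rwa [Nat.cast_succ, ← add_assoc]
  have hstable : ∀ k j : ℕ, ∀ m < N₀ + k, s (k + j) m = s k m := by
    intro k j m hm
    induction j with
    | zero => rfl
    | succ j ih =>
      show Function.update (s (k + j)) (N₀ + (k + j : ℕ)) _ m = s k m
      rw [Function.update_of_ne (by push_cast; omega)]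
      exact ih
  have hagree : ∀ k k' : ℕ, ∀ m < N₀ + min k k', s k m = s k' m := by
    intro k k' m hm
    rcases le_total k k' with h | h
    · obtain ⟨j, rfl⟩ := Nat.exists_eq_add_of_le h
      exact (hstable k j m (by simpa using hm)).symm
    · obtain ⟨j, rfl⟩ := Nat.exists_eq_add_of_le h
      exact hstable k' j m (by simpa using hm)
  refine ⟨fun m => s ((m - N₀).toNat + 1) m, fun n hn =>
    hF n (s (n - N₀).toNat) _
      (fun m hm => hagree (n - N₀).toNat ((m - N₀).toNat + 1) m (by omega)) ?_⟩
  simpa [Int.toNat_of_nonneg (sub_nonneg.2 hn)] using hs (n - N₀).toNat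

section CoefficientSlices

def nextCoeffs (S : Set (LaurentSeries K)) (n : ℤ) (a : ℤ → K) : Set K :=
  {c | ∃ f ∈ S, (∀ m < n, f.coeff m = a m) ∧ f.coeff n = c}

lemma nextCoeffs_mono {S T : Set (LaurentSeries K)} (hST : S ⊆ T) (n : ℤ) (a : ℤ → K) :
    nextCoeffs S n a ⊆ nextCoeffs T n a :=
  fun _ ⟨f, hf, h⟩ => ⟨f, hST hf, h⟩

def coeffSlice (M : AddSubgroup (LaurentSeries K)) (n : ℤ) : AddSubgroup K where
  carrier := nextCoeffs (M : Set (LaurentSeries K)) n 0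
  zero_mem' := ⟨0, M.zero_mem, fun _ _ => rfl, rfl⟩
  add_mem' := by
    rintro _ _ ⟨f, hf, hf0, rfl⟩ ⟨g, hg, hg0, rfl⟩
    exact ⟨f + g, M.add_mem hf hg, fun m hm => by simp [hf0 m hm, hg0 m hm], by simp⟩
  neg_mem' := by
    rintro _ ⟨f, hf, hf0, rfl⟩
    exact ⟨-f, M.neg_mem hf, fun m hm => by simp [hf0 m hm], by simp⟩

variable {M : AddSubgroup (LaurentSeries K)} {n : ℤ}

lemma isOpen_coeffSlice (hM : {c : K | HahnSeries.single n c ∈ M} ∈ 𝓝 0) :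
    IsOpen (coeffSlice M n : Set K) :=
  (coeffSlice M n).isOpen_of_mem_nhds (g := 0) <| mem_of_superset hM fun c hc =>
    ⟨_, hc, fun m hm => by simp [hm.ne], by simp⟩

lemma smul_mem_coeffSlice (hM : ∀ c : K, ‖c‖ ≤ 1 → ∀ f ∈ M, c • f ∈ M) :
    ∀ c : K, ‖c‖ ≤ 1 → ∀ x ∈ coeffSlice M n, c * x ∈ coeffSlice M n := by
  rintro c hc _ ⟨f, hf, hf0, rfl⟩
  exact ⟨c • f, hM c hc f hf, fun m hm => by simp [hf0 m hm], by simp⟩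

lemma nextCoeffs_eq_preimage {C : Set (LaurentSeries K)}
    (hCM : ∀ f₀ ∈ C, ∀ f, f ∈ C ↔ f - f₀ ∈ M) {a : ℤ → K} {f₀ : LaurentSeries K}
    (hf₀ : f₀ ∈ C) (ha : ∀ m < n, f₀.coeff m = a m) :
    nextCoeffs C n a = (· - f₀.coeff n) ⁻¹' coeffSlice M n := by
  ext c
  constructor
  · rintro ⟨f, hf, hfa, rfl⟩
    exact ⟨f - f₀, (hCM f₀ hf₀ f).1 hf, fun m hm => by simp [hfa m hm, ha m hm], by simp⟩
  · rintro ⟨g, hg, hg0, hgc⟩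
    refine ⟨g + f₀, (hCM f₀ hf₀ _).2 (by simpa using hg),
      fun m hm => by simp [hg0 m hm, ha m hm], ?_⟩
    simp [hgc]

end CoefficientSlices

section DirectedCosets

variable [ProperSpace K] {ι : Type} [Nonempty ι]

lemma exists_update_of_directed_cosets {M : ι → AddSubgroup (LaurentSeries K)}
    {C : ι → Set (LaurentSeries K)} (hCM : ∀ i, ∀ f₀ ∈ C i, ∀ f, f ∈ C i ↔ f - f₀ ∈ M i)
    (hC : Directed (· ⊇ ·) C) (hM_smul : ∀ i, ∀ c : K, ‖c‖ ≤ 1 → ∀ f ∈ M i, c • f ∈ M i)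
    {n : ℤ} (hM_single : ∀ i, {c : K | HahnSeries.single n c ∈ M i} ∈ 𝓝 0) {a : ℤ → K}
    (ha : ∀ i, ∃ f ∈ C i, ∀ m < n, f.coeff m = a m) :
    ∃ c, ∀ i, ∃ f ∈ C i, ∀ m < n + 1, f.coeff m = Function.update a n c m := by
  have hshape : ∀ i, IsCompact (nextCoeffs (C i) n a) ∨ nextCoeffs (C i) n a = univ := by
    intro i
    obtain ⟨f₀, hf₀, hf₀a⟩ := ha i
    rw [nextCoeffs_eq_preimage (hCM i) hf₀ hf₀a]
    rcases addSubgroup_eq_top_or_isCompact _ (isOpen_coeffSlice (hM_single i))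
      (smul_mem_coeffSlice (hM_smul i)) with h | h
    · simp [h]
    · exact Or.inl ((Homeomorph.subRight (f₀.coeff n)).isCompact_preimage.2 h)
  obtain ⟨c, hc⟩ := nonempty_iInter_of_directed_of_isCompact_or_eq_univ
    (fun i j => (hC i j).imp fun k hk => ⟨nextCoeffs_mono hk.1 n a, nextCoeffs_mono hk.2 n a⟩)
    (fun i => let ⟨f, hf, hfa⟩ := ha i; ⟨f.coeff n, f, hf, hfa, rfl⟩) hshape
  refine ⟨c, fun i => ?_⟩
  obtain ⟨f, hf, hfa, hfc⟩ := mem_iInter.1 hc i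
  refine ⟨f, hf, fun m hm => ?_⟩
  rcases (Int.lt_add_one_iff.1 hm).lt_or_eq with hm | rfl
  · simp [hm.ne, hfa m hm]
  · simp [hfc]

end DirectedCosets

lemma IsOSubmodule.sub_mem {V : Type} [AddCommGroup V] [Module K V] {S : Set V}
    (h : IsOSubmodule K S) {x y : V} (hx : x ∈ S) (hy : y ∈ S) : x - y ∈ S := by
  simpa [sub_eq_add_neg] using h.2.1 x hx _ (h.2.2 (-1) (by simp) y hy)

def IsOSubmodule.toAddSubgroup {V : Type} [AddCommGroup V] [Module K V] {S : Set V}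
    (h : IsOSubmodule K S) : AddSubgroup V where
  carrier := S
  zero_mem' := h.1
  add_mem' := fun hx hy => h.2.1 _ hx _ hy
  neg_mem' := fun hx => by simpa using h.sub_mem h.1 hx

@[simp]
lemma IsOSubmodule.mem_toAddSubgroup {V : Type} [AddCommGroup V] [Module K V] {S : Set V}
    (h : IsOSubmodule K S) {x : V} : x ∈ h.toAddSubgroup ↔ x ∈ S :=
  Iff.rfl

/-- `Σ_{i ≥ N₀} Q_i t^i ⊆ K((t))`. -/
def seriesSubgroup (N₀ : ℤ) (Q : ℤ → OpenAddSubgroup K) : AddSubgroup (LaurentSeries K) where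
  carrier := {f | (∀ i < N₀, f.coeff i = 0) ∧ ∀ i, f.coeff i ∈ Q i}
  zero_mem' := ⟨fun _ _ => rfl, fun i => (Q i).zero_mem⟩
  add_mem' := fun hf hg =>
    ⟨fun i hi => by simp [hf.1 i hi, hg.1 i hi], fun i => by simpa using add_mem (hf.2 i) (hg.2 i)⟩
  neg_mem' := fun hf => ⟨fun i hi => by simp [hf.1 i hi], fun i => by simpa using hf.2 i⟩

section LinearCompactness

variable {N₀ : ℤ} {Q : ℤ → OpenAddSubgroup K}

lemma smul_mem_seriesSubgroup (hQ : ∀ i, ∀ c : K, ‖c‖ ≤ 1 → ∀ x ∈ Q i, c * x ∈ Q i) {c : K}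
    (hc : ‖c‖ ≤ 1) {f : LaurentSeries K} (hf : f ∈ seriesSubgroup N₀ Q) :
    c • f ∈ seriesSubgroup N₀ Q :=
  ⟨fun i hi => by simp [hf.1 i hi], fun i => by simpa using hQ i c hc _ (hf.2 i)⟩

lemma single_mem_seriesSubgroup {n : ℤ} (hn : N₀ ≤ n) {c : K} (hc : c ∈ Q n) :
    HahnSeries.single n c ∈ seriesSubgroup N₀ Q := by
  refine ⟨fun i hi => by simp [(hi.trans_le hn).ne], fun i => ?_⟩
  rcases eq_or_ne i n with rfl | hin
  · simp [hc]
  · simp [hin]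

variable [ProperSpace K]

theorem nonempty_iInter_of_directed_cosets {ι : Type} [Nonempty ι]
    {M : ι → AddSubgroup (LaurentSeries K)} {C : ι → Set (LaurentSeries K)}
    (hM_smul : ∀ i, ∀ c : K, ‖c‖ ≤ 1 → ∀ f ∈ M i, c • f ∈ M i)
    (hM_single : ∀ i, ∀ n, N₀ ≤ n → {c : K | HahnSeries.single n c ∈ M i} ∈ 𝓝 0)
    (hM_vanish : ∀ i, ∃ N, ∀ f ∈ seriesSubgroup N₀ Q, (∀ m < N, f.coeff m = 0) → f ∈ M i)
    (hCA : ∀ i, C i ⊆ seriesSubgroup N₀ Q) (hCM : ∀ i, ∀ f₀ ∈ C i, ∀ f, f ∈ C i ↔ f - f₀ ∈ M i)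
    (hC_ne : ∀ i, (C i).Nonempty) (hC : Directed (· ⊇ ·) C) : (⋂ i, C i).Nonempty := by
  obtain ⟨a, ha⟩ := exists_forall_of_forall_exists_update
    (fun n a => ∀ i, ∃ f ∈ C i, ∀ m < n, f.coeff m = a m)
    (fun n a b hab h i => (h i).imp fun f hf => ⟨hf.1, fun m hm => (hf.2 m hm).trans (hab m hm)⟩)
    (a₀ := 0) (fun i => (hC_ne i).imp fun f hf => ⟨hf, fun m hm => (hCA i hf).1 m hm⟩)
    fun n a hn ha => exists_update_of_directed_cosets hCM hC hM_smul (hM_single · n hn) ha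
  obtain ⟨i₀⟩ := ‹Nonempty ι›
  have ha_eq : ∀ m, ∃ f ∈ seriesSubgroup N₀ Q, f.coeff m = a m := fun m =>
    let ⟨f, hf, hfa⟩ := ha (max N₀ (m + 1)) (le_max_left _ _) i₀
    ⟨f, hCA i₀ hf, hfa m (lt_max_of_lt_right (lt_add_one m))⟩
  have ha_low : ∀ m < N₀, a m = 0 := fun m hm =>
    let ⟨f, hf, hfa⟩ := ha_eq m
    hfa ▸ hf.1 m hm
  let g : LaurentSeries K := HahnSeries.ofSuppBddBelow a
    ⟨N₀, fun m hm => not_lt.1 fun h => hm (ha_low m h)⟩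
  have hgc : ∀ m, g.coeff m = a m := fun _ => rfl
  have hg : g ∈ seriesSubgroup N₀ Q := by
    refine ⟨fun m hm => (hgc m).trans (ha_low m hm), fun m => ?_⟩
    obtain ⟨f, hf, hfa⟩ := ha_eq m
    rw [hgc, ← hfa]
    exact hf.2 m
  refine ⟨g, mem_iInter.2 fun i => ?_⟩
  obtain ⟨N, hN⟩ := hM_vanish i
  obtain ⟨f, hf, hfa⟩ := ha (max N₀ N) (le_max_left _ _) i
  refine (hCM i f hf g).2 (hN _ (sub_mem hg (hCA i hf)) fun m hm => ?_)
  simp [hgc, hfa m (lt_max_of_lt_right hm)]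

theorem isCCompact_seriesSubgroup
    (hQ : ∀ i, ∀ c : K, ‖c‖ ≤ 1 → ∀ x ∈ Q i, c * x ∈ Q i) :
    IsCCompact K (laurentTop K) (seriesSubgroup N₀ Q) := by
  intro ι L hL hdir x hxA hcompat
  cases isEmpty_or_nonempty ι
  · exact ⟨0, zero_mem _, fun i => isEmptyElim i⟩
  have hL0 : ∀ i, (0 : LaurentSeries K) ∈ L i := fun i => (hL i).1.1.1
  have hLadd : ∀ i, ∀ f ∈ L i, ∀ g ∈ L i, f + g ∈ L i := fun i => (hL i).1.1.2.1
  obtain ⟨g, hg⟩ := nonempty_iInter_of_directed_cosets (N₀ := N₀) (Q := Q)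
    (M := fun i => seriesSubgroup N₀ Q ⊓ (hL i).1.1.toAddSubgroup)
    (C := fun i => {f | f ∈ seriesSubgroup N₀ Q ∧ f - x i ∈ L i})
    (fun i c hc f hf => ⟨smul_mem_seriesSubgroup hQ hc hf.1, (hL i).1.1.2.2 c hc f hf.2⟩)
    (fun i n hn => mem_of_superset (inter_mem ((Q n).isOpen.mem_nhds (Q n).zero_mem)
      ((isOpen_setOf_single_mem n (hL i).2).mem_nhds (by simpa using hL0 i)))
      fun c hc => ⟨single_mem_seriesSubgroup hn hc.1, hc.2⟩)
    (fun i => let ⟨N, hN⟩ := exists_mem_of_coeff_eq_zero_below (hL i).2 (hL0 i)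
      ⟨N, fun f hf hf0 => ⟨hf, hN f hf0⟩⟩)
    (fun i f hf => hf.1)
    (fun i f₀ hf₀ f => ⟨fun hf => AddSubgroup.mem_inf.2 ⟨sub_mem hf.1 hf₀.1, by
        simpa using (hL i).1.1.sub_mem hf.2 hf₀.2⟩, fun hf => ⟨by simpa using add_mem hf.1 hf₀.1,
        by simpa [add_sub_assoc] using hLadd i _ hf.2 _ hf₀.2⟩⟩)
    (fun i => ⟨x i, hxA i, by simpa using hL0 i⟩)
    (fun i j => (hdir i j).imp fun k hk => ⟨fun f hf => ⟨hf.1, by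
        simpa using hLadd i _ (hk.1 hf.2) _ (hcompat i k hk.1)⟩, fun f hf => ⟨hf.1, by
        simpa using hLadd j _ (hk.2 hf.2) _ (hcompat j k hk.2)⟩⟩)
  exact ⟨g, (mem_iInter.1 hg (Classical.arbitrary ι)).1, fun i => (mem_iInter.1 hg i).2⟩

end LinearCompactness

section NotCompactoid

variable [IsUltrametricDist K]

lemma isLatticeSet_setOf_norm_coeff_le_one (j : ℤ) :
    IsLatticeSet K {f : LaurentSeries K | ‖f.coeff j‖ ≤ 1} := by
  refine ⟨⟨by simp, fun f hf g hg => ?_, fun c hc f hf => ?_⟩, fun v => ?_⟩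
  · simpa using (IsUltrametricDist.norm_add_le_max _ _).trans (max_le hf hg)
  · simpa using mul_le_one₀ hc (norm_nonneg _) hf
  · rcases eq_or_ne (v.coeff j) 0 with hv | hv
    · exact ⟨1, one_ne_zero, by simp [hv]⟩
    · exact ⟨(v.coeff j)⁻¹, inv_ne_zero hv, by simp [hv]⟩

lemma not_isCompactoid_of_single_mem {A : Set (LaurentSeries K)} (j : ℤ)
    (hA : ∀ c : K, HahnSeries.single j c ∈ A) : ¬ IsCompactoid K (laurentTop K) A := by
  intro h
  have hopen : IsOpen[laurentTop K] {f : LaurentSeries K | ‖f.coeff j‖ ≤ 1} := by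
    simpa using isOpen_setOf_coeff_mem j (IsUltrametricDist.isOpen_closedBall (0 : K) one_ne_zero)
  obtain ⟨m, v, hv⟩ := h _ (isLatticeSet_setOf_norm_coeff_le_one j) hopen
  obtain ⟨c, hc⟩ := NormedField.exists_lt_norm K (1 + ∑ k, ‖(v k).coeff j‖)
  obtain ⟨l, hl, d, hd, heq⟩ := hv (hA c)
  have hcoeff : c = l.coeff j + ∑ k, d k * (v k).coeff j := by
    simpa using congrArg (HahnSeries.coeff.addMonoidHom j) heq
  have hbound : ‖c‖ ≤ 1 + ∑ k, ‖(v k).coeff j‖ := by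
    rw [hcoeff]
    refine (norm_add_le _ _).trans (add_le_add hl ((norm_sum_le _ _).trans
      (Finset.sum_le_sum fun k _ => ?_)))
    rw [norm_mul]
    exact mul_le_of_le_one_left (norm_nonneg _) (hd k)
  linarith

end NotCompactoid

lemma laurentIntegers_eq :
    laurentIntegers K = (seriesSubgroup (K := K) 0 fun _ => ⊤ : Set (LaurentSeries K)) := by
  ext f
  simp [laurentIntegers, seriesSubgroup]

@[simp]
lemma mem_closedBall_openAddSubgroup_one [IsUltrametricDist K] {x : K} :
    x ∈ IsUltrametricDist.closedBall_openAddSubgroup K one_pos ↔ ‖x‖ ≤ 1 :=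
  mem_closedBall_zero_iff

lemma laurentRankTwo_eq [IsUltrametricDist K] :
    laurentRankTwo K = (seriesSubgroup (K := K) 0 (Function.update (fun _ => ⊤) 0
      (IsUltrametricDist.closedBall_openAddSubgroup K one_pos)) : Set (LaurentSeries K)) := by
  ext f
  simp only [laurentRankTwo, seriesSubgroup, SetLike.mem_coe, AddSubgroup.mem_mk]
  refine and_congr_right fun _ => ⟨fun h i => ?_, fun h => by simpa using h 0⟩
  rcases eq_or_ne i 0 with rfl | hi
  · simpa using h
  · simp [hi]

/-- In `K((t))` with the higher topology, the ring of integers `K[[t]]` and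
the rank-two ring of integers `𝒪 + tK[[t]]` are c-compact `𝒪`-submodules, but neither of them
is compactoid. -/
theorem statement13 (q : ℕ) (hK : IsCharZeroLocalField K q) :
    IsCCompact K (laurentTop K) (laurentIntegers K) ∧
    IsCCompact K (laurentTop K) (laurentRankTwo K) ∧
    ¬ IsCompactoid K (laurentTop K) (laurentIntegers K) ∧
    ¬ IsCompactoid K (laurentTop K) (laurentRankTwo K) := by
  have := hK.locallyCompact
  have : ProperSpace K := .of_locallyCompactSpace K
  have : IsUltrametricDist K :=
    IsUltrametricDist.isUltrametricDist_of_forall_norm_add_le_max_norm hK.nonarch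
  refine ⟨?_, ?_, not_isCompactoid_of_single_mem 0 fun c i hi => ?_,
    not_isCompactoid_of_single_mem 1 fun c => ⟨fun i hi => ?_, ?_⟩⟩
  · rw [laurentIntegers_eq]
    exact isCCompact_seriesSubgroup (by simp)
  · rw [laurentRankTwo_eq]
    refine isCCompact_seriesSubgroup fun i c hc x hx => ?_
    rcases eq_or_ne i 0 with rfl | hi
    · simpa using mul_le_one₀ hc (norm_nonneg x) (by simpa using hx)
    · simp [hi]
  · simp [hi.ne]
  · simp [show i ≠ 1 by omega]
  · simp

end TwoDimLF
end
end

section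
/- Let F = K((t)) or F = K{{t}} with the higher topology, and let A = Σ_{i∈ℤ} 𝔭^{k_i} t^i be an 𝒪-submodule of F with k_i ∈ ℤ ∪ {±∞}. Then the pseudo-polar of A satisfies A^γ := γ^{-1}(A^p) = Σ_{i∈ℤ} 𝔭^{1-k_{-i}} t^i, where γ(x)(y) = π_0(xy); consequently the pseudo-bipolar of A equals A itself: A^{pp} = A. -/
/-!
Common setting: `K` is a characteristic-zero local field (a finite extension of `ℚ_p`)
with ring of integers `𝒪 = {c : K | ‖c‖ ≤ 1}`, maximal ideal `𝔭 = {c : K | ‖c‖ < 1}`,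
residue field of cardinality `q` and the absolute value normalised by `‖π‖ = q⁻¹`.
We formalise the two-dimensional local fields `K((t))` (as `LaurentSeries K`) and
`K{{t}}` (as the submodule `mixedCarrier K` of `ℤ → K`), their higher topologies, and
the relevant functional-analytic notions (lattices, seminorms, boundedness,
c-compactness, compactoidness, completeness for nets, duality).
-/

open Filter Topology Set Pointwise
open scoped Classical

noncomputable section

namespace TwoDimLF

variable (K : Type) [NontriviallyNormedField K]

/-!
In both fields `γ(x)(y) = Σᵢ xᵢ y₋ᵢ` is a convergent sum of coordinate products, so for the
box `A = Σ 𝔭^{kᵢ} tⁱ` the polar condition `|γ(x)(y)| < 1` decouples coordinatewise. Testing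
against the monomials `c t⁻ⁱ`, `c ∈ 𝔭^{k₋ᵢ}`, forces `xᵢ ∈ 𝔭^{1-k₋ᵢ}` because the norm takes
values in `q^ℤ`; conversely each product then has norm at most `q⁻¹`, and the ultrametric
inequality bounds the whole sum by `q⁻¹ < 1`. Since `1 - (1 - k) = k`, the same computation
applied to `A^γ`, whose elements give continuous forms, yields `A^{pp} = A`.
-/

structure IsDiscretelyNormed (q : ℕ) : Prop where
  one_lt_q : 1 < q
  exists_uniformizer : ∃ π : K, ‖π‖ = ((q : ℝ))⁻¹
  norm_values : ∀ x : K, x ≠ 0 → ∃ n : ℤ, ‖x‖ = (q : ℝ) ^ (-n)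

variable {K}

theorem IsCharZeroLocalField.isDiscretelyNormed {q : ℕ} (hK : IsCharZeroLocalField K q) :
    IsDiscretelyNormed K q :=
  ⟨hK.one_lt_q, hK.exists_uniformizer, hK.norm_values⟩

section FractionalIdeals

variable {q : ℕ}

theorem zero_mem_pE (m : WithBot (WithTop ℤ)) : (0 : K) ∈ pE K q m := by
  induction m using WithBot.recBotCoe with
  | bot => trivial
  | coe m =>
    induction m using WithTop.recTopCoe with
    | top => rfl
    | coe z =>
      show ‖(0 : K)‖ ≤ (q : ℝ) ^ (-z)
      simpa using zpow_nonneg (Nat.cast_nonneg q) _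

theorem oneSubE_oneSubE (m : WithBot (WithTop ℤ)) : oneSubE (oneSubE m) = m := by
  induction m using WithBot.recBotCoe with
  | bot => rfl
  | coe m =>
    induction m using WithTop.recTopCoe with
    | top => rfl
    | coe z =>
      show (((1 - (1 - z) : ℤ) : WithTop ℤ) : WithBot (WithTop ℤ)) = _
      rw [sub_sub_cancel]

theorem norm_mul_le_of_mem_pE_oneSubE (hq : q ≠ 0) {m : WithBot (WithTop ℤ)} {c a : K}
    (hc : c ∈ pE K q m) (ha : a ∈ pE K q (oneSubE m)) : ‖c * a‖ ≤ (q : ℝ)⁻¹ := by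
  have hq₀ : (0 : ℝ) < q := by exact_mod_cast Nat.pos_of_ne_zero hq
  induction m using WithBot.recBotCoe with
  | bot =>
    rw [show a = 0 from ha, mul_zero, norm_zero]
    positivity
  | coe m =>
    induction m using WithTop.recTopCoe with
    | top =>
      rw [show c = 0 from hc, zero_mul, norm_zero]
      positivity
    | coe z =>
      have hc : ‖c‖ ≤ (q : ℝ) ^ (-z) := hc
      have ha : ‖a‖ ≤ (q : ℝ) ^ (-(1 - z)) := ha
      calc ‖c * a‖ ≤ (q : ℝ) ^ (-z) * (q : ℝ) ^ (-(1 - z)) := by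
            rw [norm_mul]; gcongr
        _ = (q : ℝ)⁻¹ := by rw [← zpow_add₀ hq₀.ne', ← zpow_neg_one]; ring_nf

theorem IsDiscretelyNormed.mem_pE_oneSubE_of_forall_norm_mul_lt_one
    (hK : IsDiscretelyNormed K q) {m : WithBot (WithTop ℤ)} {a : K}
    (h : ∀ c ∈ pE K q m, ‖c * a‖ < 1) : a ∈ pE K q (oneSubE m) := by
  have hq : (1 : ℝ) < q := by exact_mod_cast hK.one_lt_q
  induction m using WithBot.recBotCoe with
  | bot =>
    show a = 0
    by_contra ha
    obtain ⟨c, hc⟩ := NormedField.exists_lt_norm K ‖a‖⁻¹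
    have := h c trivial
    rw [norm_mul, ← lt_div_iff₀ (norm_pos_iff.mpr ha), one_div] at this
    exact this.not_gt hc
  | coe m =>
    induction m using WithTop.recTopCoe with
    | top => trivial
    | coe z =>
      show ‖a‖ ≤ (q : ℝ) ^ (-(1 - z))
      rcases eq_or_ne a 0 with rfl | ha
      · exact (norm_zero (E := K)).symm ▸ zpow_nonneg (Nat.cast_nonneg q) _
      obtain ⟨π, hπ⟩ := hK.exists_uniformizer
      have hπz : ‖π ^ z‖ = (q : ℝ) ^ (-z) := by rw [norm_zpow, hπ, inv_zpow, zpow_neg]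
      have hlt := h (π ^ z) hπz.le
      obtain ⟨n, hn⟩ := hK.norm_values a ha
      -- `‖πᶻ a‖ < 1` reads `q^(-z-n) < q^0`, and the exponents are integers
      rw [norm_mul, hπz, hn, ← zpow_add₀ (by positivity), ← zpow_zero (q : ℝ),
        zpow_lt_zpow_iff_right₀ hq] at hlt
      rw [hn]
      exact zpow_le_zpow_right₀ hq.le (by omega)

end FractionalIdeals

theorem isOpen_addTopologyOf {W : Type} [AddCommGroup W] {B : Set (Set W)} {S : Set W}
    (h : ∀ a ∈ S, ∃ U ∈ B, ∀ u ∈ U, a + u ∈ S) : IsOpen[addTopologyOf B] S := by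
  intro a ha
  obtain ⟨U, hUB, hU⟩ := h a ha
  exact Filter.mem_map.mpr <| Filter.mem_of_superset
    (Filter.mem_iInf_of_mem U (Filter.mem_iInf_of_mem hUB (Filter.mem_principal_self U))) hU

theorem continuous_addTopologyOf_of_forall_norm_le {W : Type} [AddCommGroup W]
    {B : Set (Set W)} {f : W → K} (hf : ∀ x y, f (x + y) = f x + f y)
    (h : ∀ ε > 0, ∃ U ∈ B, ∀ u ∈ U, ‖f u‖ ≤ ε) : @Continuous W K (addTopologyOf B) _ f := by
  refine @continuous_def W K (addTopologyOf B) _ f |>.mpr fun S hS => ?_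
  refine isOpen_addTopologyOf fun a ha => ?_
  obtain ⟨ε, hε, hball⟩ := Metric.isOpen_iff.mp hS _ ha
  obtain ⟨U, hUB, hU⟩ := h (ε / 2) (half_pos hε)
  refine ⟨U, hUB, fun u hu => hball ?_⟩
  rw [Metric.mem_ball, dist_eq_norm, hf, add_sub_cancel_left]
  exact (hU u hu).trans_lt (half_lt_self hε)

theorem isOpen_setOf_norm_mul_le [IsUltrametricDist K] (a : K) {ε : ℝ} (hε : 0 < ε) :
    IsOpen {c : K | ‖a * c‖ ≤ ε} := by
  have := (IsUltrametricDist.isOpen_closedBall (0 : K) hε.ne').preimage (continuous_const_mul a)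
  simpa [Set.preimage, dist_zero_right] using this

section CoordinatePairing

variable {V : Type} [AddCommGroup V] [Module K V]

/-- The box `Σᵢ 𝔭^{kᵢ} tⁱ` in a space with coordinates `coeff`. -/
def pEBox (coeff : V → ℤ → K) (q : ℕ) (k : ℤ → WithBot (WithTop ℤ)) : Set V :=
  {v | ∀ i, coeff v i ∈ pE K q (k i)}

structure IsCoordinatePairing (τ : TopologicalSpace V) (coeff : V →ₗ[K] ℤ → K)
    (P : V → V → K) : Prop where
  hasSum : ∀ x y, HasSum (fun i => coeff x i * coeff y (-i)) (P x y)
  continuous : ∀ x, @Continuous V K τ _ (P x)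
  exists_coeff_eq_single : ∀ (i : ℤ) (c : K), ∃ v, coeff v = Pi.single i c

variable {coeff : V →ₗ[K] ℤ → K} {P : V → V → K}

theorem pairing_eq_mul_of_coeff_eq_single_right
    (hP : ∀ x y, HasSum (fun i => coeff x i * coeff y (-i)) (P x y)) (x : V) {v : V} {i : ℤ}
    {c : K} (hv : coeff v = Pi.single (-i) c) : P x v = coeff x i * c := by
  have := (hP x v).unique (hasSum_single i fun j hj => by
    rw [hv, Pi.single_eq_of_ne (neg_injective.ne hj), mul_zero])
  rwa [hv, Pi.single_eq_same] at this

theorem pairing_eq_mul_of_coeff_eq_single_left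
    (hP : ∀ x y, HasSum (fun i => coeff x i * coeff y (-i)) (P x y)) {v : V} (y : V) {i : ℤ}
    {c : K} (hv : coeff v = Pi.single (-i) c) : P v y = c * coeff y i := by
  have := (hP v y).unique (hasSum_single (-i) fun j hj => by
    rw [hv, Pi.single_eq_of_ne hj, zero_mul])
  rwa [hv, Pi.single_eq_same, neg_neg] at this

theorem isLinearMap_pairing (hP : ∀ x y, HasSum (fun i => coeff x i * coeff y (-i)) (P x y))
    (x : V) : IsLinearMap K (P x) where
  map_add y z := (hP x (y + z)).unique <| by
    simpa only [map_add, Pi.add_apply, mul_add] using (hP x y).add (hP x z)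
  map_smul c y := (hP x (c • y)).unique <| by
    simpa only [map_smul, Pi.smul_apply, smul_eq_mul, mul_left_comm] using (hP x y).mul_left c

theorem norm_pairing_le [IsUltrametricDist K]
    (hP : ∀ x y, HasSum (fun i => coeff x i * coeff y (-i)) (P x y)) {x y : V} {r : ℝ}
    (hr : 0 ≤ r) (h : ∀ i, ‖coeff x i * coeff y (-i)‖ ≤ r) : ‖P x y‖ ≤ r :=
  (hP x y).tsum_eq ▸ IsUltrametricDist.norm_tsum_le_of_forall_le_of_nonneg hr h

namespace IsCoordinatePairing

variable {τ : TopologicalSpace V} {q : ℕ}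

theorem setOf_mem_pseudoPolar [IsUltrametricDist K] (hP : IsCoordinatePairing τ coeff P)
    (hK : IsDiscretelyNormed K q) (k : ℤ → WithBot (WithTop ℤ)) :
    {x | P x ∈ pseudoPolar K τ (pEBox coeff q k)} =
      pEBox coeff q (fun i => oneSubE (k (-i))) := by
  have hq : (1 : ℝ) < q := by exact_mod_cast hK.one_lt_q
  ext x
  constructor
  · rintro ⟨-, hpolar⟩ i
    refine hK.mem_pE_oneSubE_of_forall_norm_mul_lt_one fun c hc => ?_
    obtain ⟨v, hv⟩ := hP.exists_coeff_eq_single (-i) c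
    have hvA : v ∈ pEBox coeff q k := fun j => by
      rcases eq_or_ne j (-i) with rfl | hj
      · rwa [hv, Pi.single_eq_same]
      · rw [hv, Pi.single_eq_of_ne hj]
        exact zero_mem_pE _
    simpa only [pairing_eq_mul_of_coeff_eq_single_right hP.hasSum x hv, mul_comm]
      using hpolar v hvA
  · intro hx
    refine ⟨⟨isLinearMap_pairing hP.hasSum x, hP.continuous x⟩, fun y hy => ?_⟩
    refine (norm_pairing_le hP.hasSum (by positivity) fun i => ?_).trans_lt
      (inv_lt_one_of_one_lt₀ hq)
    rw [mul_comm]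
    exact norm_mul_le_of_mem_pE_oneSubE (Nat.zero_lt_of_lt hK.one_lt_q).ne' (hy (-i)) (hx i)

theorem pseudoBipolar_pEBox [IsUltrametricDist K] (hP : IsCoordinatePairing τ coeff P)
    (hK : IsDiscretelyNormed K q) (k : ℤ → WithBot (WithTop ℤ)) :
    pseudoBipolar K τ (pEBox coeff q k) = pEBox coeff q k := by
  refine Set.Subset.antisymm (fun v hv i => ?_) fun v hv l hl => hl.2 v hv
  rw [← oneSubE_oneSubE (k i)]
  refine hK.mem_pE_oneSubE_of_forall_norm_mul_lt_one fun c hc => ?_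
  obtain ⟨u, hu⟩ := hP.exists_coeff_eq_single (-i) c
  have huA : u ∈ pEBox coeff q (fun j => oneSubE (k (-j))) := fun j => by
    rcases eq_or_ne j (-i) with rfl | hj
    · simpa only [hu, Pi.single_eq_same, neg_neg] using hc
    · rw [hu, Pi.single_eq_of_ne hj]
      exact zero_mem_pE _
  rw [← hP.setOf_mem_pseudoPolar hK] at huA
  simpa only [pairing_eq_mul_of_coeff_eq_single_left hP.hasSum v hu] using hv _ huA

end IsCoordinatePairing

end CoordinatePairing

section LaurentSeries

variable (K) in
def laurentCoeff : LaurentSeries K →ₗ[K] ℤ → K := LinearMap.pi HahnSeries.coeff.linearMap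

@[simp]
theorem laurentCoeff_apply (x : LaurentSeries K) (i : ℤ) : laurentCoeff K x i = x.coeff i := rfl

theorem _root_.HahnSeries.exists_forall_lt_coeff_eq_zero {Γ R : Type*} [LinearOrder Γ] [Zero Γ]
    [Zero R] (x : HahnSeries Γ R) : ∃ N : Γ, ∀ i < N, x.coeff i = 0 := by
  rcases eq_or_ne x 0 with rfl | hx
  · exact ⟨0, fun i _ => rfl⟩
  · exact ⟨x.order, fun i hi => HahnSeries.coeff_eq_zero_of_lt_order hi⟩

theorem laurentPairing_hasSum (x y : LaurentSeries K) :
    HasSum (fun i => laurentCoeff K x i * laurentCoeff K y (-i)) (laurentPairing K x y) := by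
  obtain ⟨N, hN⟩ := x.exists_forall_lt_coeff_eq_zero
  obtain ⟨M, hM⟩ := y.exists_forall_lt_coeff_eq_zero
  refine (summable_of_ne_finset_zero (s := Finset.Icc N (-M)) fun i hi => ?_).hasSum
  rw [Finset.mem_Icc, not_and_or, not_le, not_le] at hi
  rcases hi with hi | hi
  · exact mul_eq_zero_of_left (hN i hi) _
  · exact mul_eq_zero_of_right _ (hM (-i) (by omega))

theorem continuous_laurentPairing [IsUltrametricDist K] (x : LaurentSeries K) :
    @Continuous _ _ (laurentTop K) _ (laurentPairing K x) := by
  have hadd := (isLinearMap_pairing (coeff := laurentCoeff K) laurentPairing_hasSum x).map_add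
  refine continuous_addTopologyOf_of_forall_norm_le hadd fun ε hε => ?_
  obtain ⟨N, hN⟩ := x.exists_forall_lt_coeff_eq_zero
  refine ⟨{u | ∀ i, u.coeff i ∈ {c | ‖x.coeff (-i) * c‖ ≤ ε}}, ⟨_,
      fun i => ⟨isOpen_setOf_norm_mul_le _ hε, by simpa using hε.le⟩, ⟨1 - N, fun i hi => ?_⟩,
      rfl⟩,
    fun u hu => norm_pairing_le (coeff := laurentCoeff K) laurentPairing_hasSum hε.le
      fun i => by simpa using hu (-i)⟩
  simp [hN (-i) (by omega), hε.le]

theorem isCoordinatePairing_laurentPairing [IsUltrametricDist K] :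
    IsCoordinatePairing (laurentTop K) (laurentCoeff K) (laurentPairing K) where
  hasSum := laurentPairing_hasSum
  continuous := continuous_laurentPairing
  exists_coeff_eq_single i c := ⟨HahnSeries.single i c, funext fun j => by
    simp [HahnSeries.coeff_single, Pi.single_apply]⟩

end LaurentSeries

section MixedField

variable (K) in
def mixedCoeff : Mt K →ₗ[K] ℤ → K := (mixedCarrier K).subtype

@[simp]
theorem mixedCoeff_apply (x : Mt K) (i : ℤ) : mixedCoeff K x i = x.1 i := rfl

theorem mixedPairing_hasSum [IsUltrametricDist K] [CompleteSpace K] (x y : Mt K) :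
    HasSum (fun i => mixedCoeff K x i * mixedCoeff K y (-i)) (mixedPairing K x y) := by
  refine (NonarchimedeanAddGroup.summable_of_tendsto_cofinite_zero ?_).hasSum
  obtain ⟨⟨Cx, hCx⟩, hx⟩ := x.2
  obtain ⟨⟨Cy, hCy⟩, hy⟩ := y.2
  rw [Int.cofinite_eq, tendsto_sup]
  exact ⟨hx.zero_mul_isBoundedUnder_le (isBoundedUnder_of ⟨Cy, fun i => hCy (-i)⟩),
    isBoundedUnder_le_mul_tendsto_zero (isBoundedUnder_of ⟨Cx, hCx⟩)
      (hy.comp tendsto_neg_atTop_atBot)⟩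

theorem continuous_mixedPairing [IsUltrametricDist K] [CompleteSpace K] {q : ℕ} (hq : 1 < q)
    (x : Mt K) : @Continuous _ _ (mixedTop K q) _ (mixedPairing K x) := by
  have hadd := (isLinearMap_pairing (coeff := mixedCoeff K) mixedPairing_hasSum x).map_add
  refine continuous_addTopologyOf_of_forall_norm_le hadd fun ε hε => ?_
  obtain ⟨⟨C, hC⟩, hx⟩ := x.2
  have hball : ∀ i (r : ℝ), ‖x.1 (-i)‖ * r ≤ ε →
      {c : K | ‖c‖ ≤ r} ⊆ {c | ‖x.1 (-i) * c‖ ≤ ε} :=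
    fun i r h c hc => by
      show ‖x.1 (-i) * c‖ ≤ ε
      rw [norm_mul]
      exact (mul_le_mul_of_nonneg_left hc (norm_nonneg _)).trans h
  refine ⟨{u | ∀ i, u.1 i ∈ {c | ‖x.1 (-i) * c‖ ≤ ε}}, ⟨_,
      fun i => ⟨isOpen_setOf_norm_mul_le _ hε, by simpa using hε.le⟩, ?_, fun l => ?_, rfl⟩,
    fun u hu => norm_pairing_le (coeff := mixedCoeff K) mixedPairing_hasSum hε.le
      fun i => by simpa using hu (-i)⟩
  · have hpow : Tendsto (fun n : ℕ => C * ((q : ℝ)⁻¹) ^ n) atTop (𝓝 0) := by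
      simpa using (tendsto_pow_atTop_nhds_zero_of_lt_one (by positivity)
        (inv_lt_one_of_one_lt₀ (by exact_mod_cast hq))).const_mul C
    obtain ⟨n, hn⟩ := (hpow.eventually_le_const hε).exists
    refine ⟨n, fun i => hball i _ ?_⟩
    rw [zpow_neg, zpow_natCast, ← inv_pow]
    exact (mul_le_mul_of_nonneg_right (hC _) (by positivity)).trans hn
  · have hdecay : Tendsto (fun i => ‖x.1 (-i)‖ * (q : ℝ) ^ (-l)) atTop (𝓝 0) := by
      simpa using (hx.comp tendsto_neg_atTop_atBot).norm.mul_const ((q : ℝ) ^ (-l))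
    obtain ⟨i₀, hi₀⟩ := eventually_atTop.mp (hdecay.eventually_le_const hε)
    exact ⟨i₀, fun i hi => hball i _ (hi₀ i hi)⟩

theorem isCoordinatePairing_mixedPairing [IsUltrametricDist K] [CompleteSpace K] {q : ℕ}
    (hq : 1 < q) :
    IsCoordinatePairing (mixedTop K q) (mixedCoeff K) (mixedPairing K) where
  hasSum := mixedPairing_hasSum
  continuous := continuous_mixedPairing hq
  exists_coeff_eq_single i c := ⟨c • mixedT K i, funext fun j => by
    simp [mixedT, Pi.single_apply]⟩

end MixedField

/-- Let `F = K((t))` or `F = K{{t}}` with the higher topology and let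
`A = Σ_{i∈ℤ} 𝔭^{k_i} t^i` with `k_i ∈ ℤ ∪ {±∞}`. Then the pseudo-polar of `A` satisfies
`A^γ = γ⁻¹(A^p) = Σ_{i∈ℤ} 𝔭^{1-k_{-i}} t^i`, where `γ(x)(y) = π₀(xy)`; consequently the
pseudo-bipolar of `A` equals `A` itself: `A^{pp} = A`. -/
theorem statement19 (q : ℕ) (hK : IsCharZeroLocalField K q) :
    (∀ k : ℤ → WithBot (WithTop ℤ),
      {x : LaurentSeries K |
          laurentPairing K x ∈ pseudoPolar K (laurentTop K) (laurentPE K q k)} =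
        laurentPE K q (fun i => oneSubE (k (-i))) ∧
      pseudoBipolar K (laurentTop K) (laurentPE K q k) = laurentPE K q k) ∧
    (∀ k : ℤ → WithBot (WithTop ℤ),
      {x : Mt K | mixedPairing K x ∈ pseudoPolar K (mixedTop K q) (mixedPE K q k)} =
        mixedPE K q (fun i => oneSubE (k (-i))) ∧
      pseudoBipolar K (mixedTop K q) (mixedPE K q k) = mixedPE K q k) := by
  have := IsUltrametricDist.isUltrametricDist_of_forall_norm_add_le_max_norm hK.nonarch
  have := hK.complete
  have hL := isCoordinatePairing_laurentPairing (K := K)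
  have hM := isCoordinatePairing_mixedPairing (K := K) hK.one_lt_q
  have hD := hK.isDiscretelyNormed
  exact ⟨fun k => ⟨hL.setOf_mem_pseudoPolar hD k, hL.pseudoBipolar_pEBox hD k⟩,
    fun k => ⟨hM.setOf_mem_pseudoPolar hD k, hM.pseudoBipolar_pEBox hD k⟩⟩

end TwoDimLF
end
end
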